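/- Let v₁,…,vₙ be an orthonormal basis of ℝⁿ and let T be the 2n×2n matrix whose columns are v₁⁽¹⁾, v₁⁽²⁾, …, vₙ⁽¹⁾, vₙ⁽²⁾, where for v = (v₁,…,vₙ), v⁽¹⁾ = (v₁,0,…,vₙ,0) and v⁽²⁾ = (0,v₁,…,0,vₙ). Then T Tᵀ = I_{2n} and Tᵀ Ĵ T = Ĵ, where Ĵ = diag(J₂,…,J₂), J₂ = [[0,−1],[1,0]]. Moreover, if the v_k are an eigenbasis of a symmetric matrix C with Cv_k = λ_k v_k, and H̃ is a symmetric 2n×2n matrix with 2×2 blocks H̃_ij = C_ij diag(−2,1), then the substitution X = TY transforms the system f(ν)(X'' + 2ĴX') = (I_{2n} − H̃)X into the decoupled 2-dimensional systems f(ν)(Y_k'' + 2J₂Y_k') = G_k Y_k, k = 1,…,n, with G_k = diag(3 + 2δ_k, −δ_k) and δ_k = λ_k − 1, for any scalar function f. -/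

import Mathlib

open Matrix Finset

/-- The rotation `J₂ = [[0,−1],[1,0]]` applied to a planar vector. -/
def j2 (v : Fin 2 → ℝ) : Fin 2 → ℝ := ![-(v 1), v 0]

/-- The block-diagonal matrix `Ĵ = diag(J₂,…,J₂)` on `ℝ^{2n}`, indexed by `Fin n × Fin 2`. -/
def Jhat (n : ℕ) : Matrix (Fin n × Fin 2) (Fin n × Fin 2) ℝ :=
  fun rc cc => if rc.1 = cc.1 then (!![0, -1; 1, 0] : Matrix (Fin 2) (Fin 2) ℝ) rc.2 cc.2 else 0

/-- The matrix `T` whose column `(k,a)` is the interleaved vector `v_k⁽ᵃ⁾`: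
`v⁽¹⁾ = (v₁,0,…,vₙ,0)` and `v⁽²⁾ = (0,v₁,…,0,vₙ)`. -/
def Tinter {n : ℕ} (v : Fin n → Fin n → ℝ) :
    Matrix (Fin n × Fin 2) (Fin n × Fin 2) ℝ :=
  fun rc cc => if rc.2 = cc.2 then v cc.1 rc.1 else 0

/-- The `2n × 2n` matrix with `2×2` blocks `H̃_ij = C_ij · diag(−2,1)`. -/
def Htilde {n : ℕ} (C : Matrix (Fin n) (Fin n) ℝ) :
    Matrix (Fin n × Fin 2) (Fin n × Fin 2) ℝ :=
  fun rc cc => C rc.1 cc.1 * (Matrix.diagonal ![(-2 : ℝ), 1]) rc.2 cc.2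

/-- For an orthonormal basis `v₁,…,vₙ` of `ℝⁿ`, the interleaving matrix
`T` satisfies `T Tᵀ = I` and `Tᵀ Ĵ T = Ĵ`; moreover, if the `v_k` form an eigenbasis of a
symmetric matrix `C` with `C v_k = λ_k v_k`, then the substitution `X = T Y` transforms
`f(ν)(X'' + 2ĴX') = (I − H̃)X` into the decoupled systems
`f(ν)(Y_k'' + 2J₂Y_k') = G_k Y_k` with `G_k = diag(3+2δ_k, −δ_k)`, `δ_k = λ_k − 1`. -/
theorem interleaving_transformation_decouples
    {n : ℕ} (v : Fin n → Fin n → ℝ)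
    (hortho : ∀ k l, v k ⬝ᵥ v l = if k = l then (1 : ℝ) else 0)
    (C : Matrix (Fin n) (Fin n) ℝ) (hC : C.IsSymm)
    (lam : Fin n → ℝ) (heig : ∀ k, C.mulVec (v k) = lam k • v k)
    (f : ℝ → ℝ) (X Y : ℝ → (Fin n × Fin 2 → ℝ))
    (hXY : ∀ t, X t = (Tinter v).mulVec (Y t))
    (hYd : ∀ t, DifferentiableAt ℝ Y t ∧ DifferentiableAt ℝ (deriv Y) t) :
    Tinter v * (Tinter v)ᵀ = 1 ∧
    (Tinter v)ᵀ * Jhat n * Tinter v = Jhat n ∧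
    (∀ t : ℝ,
      (f t • (deriv (deriv X) t + (2 : ℝ) • (Jhat n).mulVec (deriv X t))
          = (1 - Htilde C).mulVec (X t))
        ↔
      (∀ k : Fin n,
        f t • (fun a => deriv (deriv Y) t (k, a))
            + (2 * f t) • j2 (fun a => deriv Y t (k, a))
          = (Matrix.diagonal ![3 + 2 * (lam k - 1), -(lam k - 1)]).mulVec
              (fun a => Y t (k, a)))) := by
  classical
  -- orthonormality, as matrix identities
  have hvvT : (Matrix.of v) * (Matrix.of v)ᵀ = 1 := by
    ext i j
    have := hortho i j
    simpa [Matrix.mul_apply, Matrix.one_apply, dotProduct] using this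
  have hvTv : (Matrix.of v)ᵀ * (Matrix.of v) = 1 := mul_eq_one_comm.mp hvvT
  have hcols : ∀ i j, (∑ k, v k i * v k j) = if i = j then (1:ℝ) else 0 := by
    intro i j
    have := congrFun (congrFun hvTv i) j
    simpa [Matrix.mul_apply, Matrix.one_apply] using this
  -- Part 1 : T Tᵀ = 1
  have hTT : Tinter v * (Tinter v)ᵀ = 1 := by
    ext ⟨i,a⟩ ⟨j,b⟩
    simp only [Matrix.mul_apply, Matrix.transpose_apply, Tinter, Matrix.one_apply, Prod.mk.injEq]
    rw [Fintype.sum_prod_type]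
    by_cases hab : a = b
    · subst hab
      simp [ite_mul, mul_ite, Finset.sum_ite_eq, hcols]
    · simp only [ite_mul, mul_ite, zero_mul, mul_zero]
      have : ∀ k : Fin n,
          (∑ c : Fin 2, if a = c then (if b = c then v k i * v k j else 0) else 0) = 0 := by
        intro k
        apply Finset.sum_eq_zero
        intro c _
        by_cases h1 : a = c
        · subst h1; simp [Ne.symm hab]
        · simp [h1]
      simp [this, hab]
  have hTvT : (Tinter v)ᵀ * Tinter v = 1 := mul_eq_one_comm.mp hTT
  -- J commutes with T
  have hJT : Jhat n * Tinter v = Tinter v * Jhat n := by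
    ext ⟨i,a⟩ ⟨k,c⟩
    simp only [Matrix.mul_apply, Tinter, Jhat]
    rw [Fintype.sum_prod_type, Fintype.sum_prod_type]
    simp only [ite_mul, mul_ite, zero_mul, mul_zero, Finset.sum_ite_eq, Finset.sum_ite_eq',
      Finset.mem_univ, if_true]
    fin_cases a <;> fin_cases c <;>
      simp [Fin.sum_univ_two, Finset.sum_ite_eq, Finset.sum_ite_eq']
  -- Part 2
  have hpart2 : (Tinter v)ᵀ * Jhat n * Tinter v = Jhat n := by
    rw [Matrix.mul_assoc, hJT, ← Matrix.mul_assoc, hTvT, Matrix.one_mul]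
  -- the decoupled block matrix G
  set G : Matrix (Fin n × Fin 2) (Fin n × Fin 2) ℝ :=
    Matrix.of fun rc cc => if rc.1 = cc.1 then
      (Matrix.diagonal ![3 + 2 * (lam rc.1 - 1), -(lam rc.1 - 1)]) rc.2 cc.2 else 0 with hG
  -- (1 - H̃) T = T G
  have heig' : ∀ k i, (∑ l, C i l * v k l) = lam k * v k i := by
    intro k i
    have := congrFun (heig k) i
    simpa [Matrix.mulVec, dotProduct] using this
  have h2 : ∀ k i, (∑ l, C i l * v k l * 2) = lam k * v k i * 2 := by
    intro k i; rw [← Finset.sum_mul, heig']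
  have hHT : (1 - Htilde C) * Tinter v = Tinter v * G := by
    ext ⟨i,a⟩ ⟨k,c⟩
    simp only [hG, Matrix.mul_apply, Matrix.sub_apply, Matrix.one_apply, Tinter, Htilde,
      Matrix.of_apply, Fintype.sum_prod_type]
    simp only [mul_ite, mul_zero, ite_mul, zero_mul, sub_mul, Finset.sum_ite_eq,
      Finset.sum_ite_eq', Finset.mem_univ, if_true, Finset.sum_sub_distrib]
    fin_cases a <;> fin_cases c <;>
      simp [Matrix.diagonal, Fin.sum_univ_two, Prod.ext_iff, heig'] <;>
      try ring
    all_goals linear_combination h2 k i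
  -- injectivity of T.mulVec
  have hinj : Function.Injective (Tinter v).mulVec := by
    intro x y h
    have := congrArg ((Tinter v)ᵀ.mulVec) h
    simpa [Matrix.mulVec_mulVec, hTvT, Matrix.one_mulVec] using this
  -- pointwise formulas for Ĵ and G acting on vectors
  have hJmv : ∀ (w : Fin n × Fin 2 → ℝ) (k : Fin n) (a : Fin 2),
      (Jhat n).mulVec w (k, a) = j2 (fun b => w (k, b)) a := by
    intro w k a
    simp only [Matrix.mulVec, dotProduct, Jhat, Fintype.sum_prod_type, ite_mul, zero_mul,
      Finset.sum_ite_eq, Finset.sum_ite_eq', Finset.mem_univ, if_true]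
    fin_cases a <;> simp [Fin.sum_univ_two, j2]
  have hGmv : ∀ (w : Fin n × Fin 2 → ℝ) (k : Fin n) (a : Fin 2),
      G.mulVec w (k, a)
        = (Matrix.diagonal ![3 + 2 * (lam k - 1), -(lam k - 1)]).mulVec (fun b => w (k, b)) a := by
    intro w k a
    simp only [hG, Matrix.mulVec, dotProduct, Matrix.of_apply, Fintype.sum_prod_type, ite_mul,
      zero_mul, Finset.sum_ite_eq, Finset.sum_ite_eq', Finset.mem_univ, if_true]
    fin_cases a <;> simp [Fin.sum_univ_two, Matrix.diagonal]
  -- derivatives of X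
  have hd1 : ∀ s, HasDerivAt X ((Tinter v).mulVec (deriv Y s)) s := by
    intro s
    have hY := (hYd s).1.hasDerivAt
    have hL := ((Matrix.mulVecLin (Tinter v)).toContinuousLinearMap.hasFDerivAt).comp_hasDerivAt
      s hY
    have hXfun : X = fun u => (Tinter v).mulVec (Y u) := funext hXY
    rw [hXfun]
    simpa [Function.comp_def, Matrix.mulVecLin_apply] using hL
  have e1 : ∀ s, deriv X s = (Tinter v).mulVec (deriv Y s) := fun s => (hd1 s).deriv
  have hd2 : ∀ s, HasDerivAt (deriv X) ((Tinter v).mulVec (deriv (deriv Y) s)) s := by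
    intro s
    have hY := (hYd s).2.hasDerivAt
    have hL := ((Matrix.mulVecLin (Tinter v)).toContinuousLinearMap.hasFDerivAt).comp_hasDerivAt
      s hY
    have : deriv X = fun u => (Tinter v).mulVec (deriv Y u) := funext e1
    rw [this]
    simpa [Function.comp_def, Matrix.mulVecLin_apply] using hL
  have e2 : ∀ s, deriv (deriv X) s = (Tinter v).mulVec (deriv (deriv Y) s) :=
    fun s => (hd2 s).deriv
  refine ⟨hTT, hpart2, fun t => ?_⟩
  set Z0 := Y t with hZ0
  set Z1 := deriv Y t with hZ1
  set Z2 := deriv (deriv Y) t with hZ2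
  rw [hXY t, e1 t, e2 t]
  -- pull T out of the equation
  have step1 :
      (f t • ((Tinter v).mulVec Z2 + (2:ℝ) • (Jhat n).mulVec ((Tinter v).mulVec Z1))
          = (1 - Htilde C).mulVec ((Tinter v).mulVec Z0))
        ↔ f t • (Z2 + (2:ℝ) • (Jhat n).mulVec Z1) = G.mulVec Z0 := by
    have l1 : (Jhat n).mulVec ((Tinter v).mulVec Z1)
        = (Tinter v).mulVec ((Jhat n).mulVec Z1) := by
      rw [Matrix.mulVec_mulVec, Matrix.mulVec_mulVec, hJT]
    have l2 : (1 - Htilde C).mulVec ((Tinter v).mulVec Z0)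
        = (Tinter v).mulVec (G.mulVec Z0) := by
      rw [Matrix.mulVec_mulVec, Matrix.mulVec_mulVec, hHT]
    rw [l1, l2, ← Matrix.mulVec_smul, ← Matrix.mulVec_add, ← Matrix.mulVec_smul]
    exact ⟨fun h => hinj h, fun h => congrArg _ h⟩
  rw [step1]
  -- decouple into blocks
  have hL : ∀ (k : Fin n) (a : Fin 2),
      (f t • (Z2 + (2:ℝ) • (Jhat n).mulVec Z1)) (k, a)
        = (f t • (fun b => Z2 (k, b)) + (2 * f t) • j2 (fun b => Z1 (k, b))) a := by
    intro k a
    simp [hJmv, Pi.smul_apply, smul_eq_mul, Pi.add_apply, mul_add]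
    ring
  constructor
  · intro h k
    funext a
    have := congrFun h (k, a)
    rw [hL k a, hGmv Z0 k a] at this
    exact this
  · intro h
    funext p
    obtain ⟨k, a⟩ := p
    rw [hL k a, hGmv Z0 k a]
    exact congrFun (h k) a
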